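/- arXiv:2003.12278 — 2 statements merged into one kernel-verified Lean document; each statement's English description precedes it below -/
import Mathlib

section
/- Let $R$ be a commutative ring, $q \in R$, $M$ an $R$-module, and $n \in \mathbb{N}$. Suppose $\sigma : \mathbb{N} \times \mathbb{N} \to M$ and $X, Y : \mathbb{N} \times \mathbb{N} \to R$ satisfy: (i) $\sigma(k,l) = X(k,l)\cdot\sigma(k+1,l) + Y(k,l)\cdot\sigma(k,l+1)$ for all $k,l$ with $k+l < n$, and (ii) $X(k,l)\,Y(k+1,l) = q\,Y(k,l)\,X(k,l+1)$ for all $k,l$. Then $\sigma(0,0) = \sum_{k+l=n} \Big(\prod_{j=0}^{l-1} Y(0,j)\Big)\Big(\prod_{i=0}^{k-1} X(i,l)\Big)\,\binom{n}{k}_q\,\sigma(k,l)$, where $\binom{n}{k}_q$ denotes the Gaussian binomial coefficient evaluated at $q$. -/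
/-- The Gaussian binomial coefficient `qBinom q n k`, defined via the q-Pascal
recursion `qBinom q (n+1) (k+1) = qBinom q n k + q^(k+1) * qBinom q n (k+1)`,
with `qBinom q n 0 = 1` and `qBinom q 0 (k+1) = 0`. -/
def qBinom {R : Type*} [CommRing R] (q : R) : ℕ → ℕ → R
  | _, 0 => 1
  | 0, _ + 1 => 0
  | n + 1, k + 1 => qBinom q n k + q ^ (k + 1) * qBinom q n (k + 1)

lemma qBinom_eq_zero {R : Type*} [CommRing R] (q : R) :
    ∀ n k, n < k → qBinom q n k = 0 := by
  intro n
  induction n with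
  | zero =>
    intro k hk
    match k, hk with
    | k + 1, _ => rfl
  | succ n ih =>
    intro k hk
    match k, hk with
    | k + 1, hk =>
      show qBinom q n k + q ^ (k + 1) * qBinom q n (k + 1) = 0
      rw [ih k (by omega), ih (k + 1) (by omega)]
      ring

lemma qBinom_zero {R : Type*} [CommRing R] (q : R) (n : ℕ) : qBinom q n 0 = 1 := by
  cases n <;> rfl

lemma prodX_mul_Y {R : Type*} [CommRing R] (q : R) (X Y : ℕ × ℕ → R)
    (hq : ∀ k l, X (k, l) * Y (k + 1, l) = q * (Y (k, l) * X (k, l + 1))) :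
    ∀ k l, (∏ i ∈ Finset.range k, X (i, l)) * Y (k, l)
      = q ^ k * (Y (0, l) * ∏ i ∈ Finset.range k, X (i, l + 1)) := by
  intro k
  induction k with
  | zero => intro l; simp
  | succ k ih =>
    intro l
    calc (∏ i ∈ Finset.range (k + 1), X (i, l)) * Y (k + 1, l)
        = (∏ i ∈ Finset.range k, X (i, l)) * (X (k, l) * Y (k + 1, l)) := by
          rw [Finset.prod_range_succ]; ring
      _ = ((∏ i ∈ Finset.range k, X (i, l)) * Y (k, l)) * (q * X (k, l + 1)) := by
          rw [hq]; ring
      _ = (q ^ k * (Y (0, l) * ∏ i ∈ Finset.range k, X (i, l + 1))) * (q * X (k, l + 1)) := by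
          rw [ih]
      _ = q ^ (k + 1) * (Y (0, l) * ∏ i ∈ Finset.range (k + 1), X (i, l + 1)) := by
          rw [Finset.prod_range_succ, pow_succ]; ring

def coefQ {R : Type*} [CommRing R] (q : R) (X Y : ℕ × ℕ → R) (n k : ℕ) : R :=
  (∏ j ∈ Finset.range (n - k), Y (0, j)) * (∏ i ∈ Finset.range k, X (i, n - k))
    * qBinom q n k

lemma coef_succ {R : Type*} [CommRing R] (q : R) (X Y : ℕ × ℕ → R)
    (hq : ∀ k l, X (k, l) * Y (k + 1, l) = q * (Y (k, l) * X (k, l + 1)))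
    (n k : ℕ) (hk : k < n) :
    coefQ q X Y (n + 1) (k + 1)
      = coefQ q X Y n k * X (k, n - k)
        + coefQ q X Y n (k + 1) * Y (k + 1, n - (k + 1)) := by
  set l := n - (k + 1) with hldef
  have h1 : n + 1 - (k + 1) = n - k := by omega
  have hl : n - k = l + 1 := by omega
  unfold coefQ
  rw [h1, hl]
  show (∏ j ∈ Finset.range (l + 1), Y (0, j)) * (∏ i ∈ Finset.range (k + 1), X (i, l + 1))
      * (qBinom q n k + q ^ (k + 1) * qBinom q n (k + 1)) = _
  have hc := prodX_mul_Y q X Y hq (k + 1) l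
  simp only [Finset.prod_range_succ] at hc ⊢
  linear_combination (-(∏ j ∈ Finset.range l, Y (0, j)) * qBinom q n (k + 1)) * hc

lemma sum_shift {M : Type*} [AddCommMonoid M] (g : ℕ → M) (n : ℕ) (h : g (n + 1) = 0) :
    ∑ k ∈ Finset.range (n + 1), g (k + 1) + g 0 = ∑ k ∈ Finset.range (n + 1), g k := by
  rw [← Finset.sum_range_succ', Finset.sum_range_succ, h, add_zero]

/-- If `σ(k,l) = X(k,l)•σ(k+1,l) + Y(k,l)•σ(k,l+1)` whenever `k+l < n`, and
`X(k,l) Y(k+1,l) = q Y(k,l) X(k,l+1)`, then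
`σ(0,0) = ∑_{k+l=n} (∏_{j<l} Y(0,j)) (∏_{i<k} X(i,l)) [n choose k]_q σ(k,l)`. -/
theorem sigma_expansion {R : Type*} [CommRing R] (q : R)
    {M : Type*} [AddCommGroup M] [Module R M]
    (n : ℕ) (σ : ℕ × ℕ → M) (X Y : ℕ × ℕ → R)
    (hrec : ∀ k l, k + l < n →
      σ (k, l) = X (k, l) • σ (k + 1, l) + Y (k, l) • σ (k, l + 1))
    (hq : ∀ k l, X (k, l) * Y (k + 1, l) = q * (Y (k, l) * X (k, l + 1))) :
    σ (0, 0) = ∑ k ∈ Finset.range (n + 1),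
      ((∏ j ∈ Finset.range (n - k), Y (0, j)) * (∏ i ∈ Finset.range k, X (i, n - k))
        * qBinom q n k) • σ (k, n - k) := by
  induction n with
  | zero => simp [qBinom]
  | succ n ih =>
    have hrec' : ∀ k l, k + l < n →
        σ (k, l) = X (k, l) • σ (k + 1, l) + Y (k, l) • σ (k, l + 1) :=
      fun k l h => hrec k l (by omega)
    have h0' : σ (0, 0) = ∑ k ∈ Finset.range (n + 1),
        ((coefQ q X Y n k * X (k, n - k)) • σ (k + 1, n - k)
          + (coefQ q X Y n k * Y (k, n - k)) • σ (k, n - k + 1)) := by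
      rw [ih hrec']
      refine Finset.sum_congr rfl fun k hk => ?_
      rw [Finset.mem_range] at hk
      rw [hrec k (n - k) (by omega), smul_add, smul_smul, smul_smul]
      rfl
    rw [h0', Finset.sum_add_distrib]
    show _ = ∑ k ∈ Finset.range (n + 1 + 1), coefQ q X Y (n + 1) k • σ (k, n + 1 - k)
    have hterm : ∀ k ∈ Finset.range (n + 1),
        coefQ q X Y (n + 1) (k + 1) • σ (k + 1, n + 1 - (k + 1))
          = (coefQ q X Y n k * X (k, n - k)) • σ (k + 1, n - k)
            + (coefQ q X Y n (k + 1) * Y (k + 1, n - (k + 1))) • σ (k + 1, n - (k + 1) + 1) := by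
      intro k hk
      rw [Finset.mem_range] at hk
      rcases Nat.lt_or_ge k n with h | h
      · have h1 : n + 1 - (k + 1) = n - k := by omega
        have h2 : n - (k + 1) + 1 = n - k := by omega
        rw [h1, h2, coef_succ q X Y hq n k h, add_smul]
      · have hkn : k = n := by omega
        rw [hkn]
        have hz1 : coefQ q X Y n (n + 1) = 0 := by
          unfold coefQ; rw [qBinom_eq_zero q n (n + 1) (by omega)]; ring
        have hz2 : coefQ q X Y (n + 1) (n + 1) = coefQ q X Y n n * X (n, n - n) := by
          unfold coefQ
          simp only [Nat.sub_self]
          have hqq : qBinom q (n + 1) (n + 1) = qBinom q n n := by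
            show qBinom q n n + q ^ (n + 1) * qBinom q n (n + 1) = _
            rw [qBinom_eq_zero q n (n + 1) (by omega)]; ring
          rw [hqq, Finset.prod_range_succ]
          ring
        have h1 : n + 1 - (n + 1) = n - n := by omega
        rw [hz1, zero_mul, zero_smul, add_zero, hz2, h1]
    conv_rhs => rw [Finset.sum_range_succ', Finset.sum_congr rfl hterm,
      Finset.sum_add_distrib]
    rw [add_assoc]
    congr 1
    have hzero : (coefQ q X Y n (n + 1) * Y (n + 1, n - (n + 1))) • σ (n + 1, n - (n + 1) + 1)
        = (0 : M) := by
      have : coefQ q X Y n (n + 1) = 0 := by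
        unfold coefQ; rw [qBinom_eq_zero q n (n + 1) (by omega)]; ring
      rw [this, zero_mul, zero_smul]
    have hshift := sum_shift
      (fun k => (coefQ q X Y n k * Y (k, n - k)) • σ (k, n - k + 1)) n hzero
    have hg0 : coefQ q X Y (n + 1) 0 • σ (0, n + 1 - 0)
        = (coefQ q X Y n 0 * Y (0, n - 0)) • σ (0, n - 0 + 1) := by
      have : coefQ q X Y (n + 1) 0 = coefQ q X Y n 0 * Y (0, n - 0) := by
        unfold coefQ
        simp only [Nat.sub_zero]
        rw [qBinom_zero, qBinom_zero, Finset.prod_range_succ]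
        ring
      rw [this]
      norm_num
    rw [hg0]
    exact hshift.symm
end

section
/- Let $R$ be a commutative ring, $q \in R$, and $X, Y : \mathbb{N} \times \mathbb{N} \to R$ functions satisfying $X(k,l)\,Y(k+1,l) = q\,Y(k,l)\,X(k,l+1)$ for all $k,l$. Fix $k, l \in \mathbb{N}$ and set $n = k+l$. For a word $w : \{0,\dots,n-1\} \to \{\mathsf{X},\mathsf{Y}\}$ with exactly $k$ letters $\mathsf{X}$, let $(a_i,b_i)$ denote the pair (number of $\mathsf{X}$'s among $w_0,\dots,w_{i-1}$, number of $\mathsf{Y}$'s among $w_0,\dots,w_{i-1}$), define the weight $\mathrm{wt}(w) = \prod_{i=0}^{n-1} W_i$ where $W_i = X(a_i,b_i)$ if $w_i = \mathsf{X}$ and $W_i = Y(a_i,b_i)$ if $w_i = \mathsf{Y}$, and define $\mathrm{inv}(w) = \#\{(i,j) : i < j,\ w_i = \mathsf{X},\ w_j = \mathsf{Y}\}$. Then $\mathrm{wt}(w) = q^{\mathrm{inv}(w)}\,\Big(\prod_{j=0}^{l-1} Y(0,j)\Big)\Big(\prod_{i=0}^{k-1} X(i,l)\Big)$. -/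
/-- Number of `X`'s (encoded as `true`) among the first `i` letters of the word `w`. -/
def countX {n : ℕ} (w : Fin n → Bool) (i : ℕ) : ℕ :=
  (Finset.univ.filter fun j : Fin n => (j : ℕ) < i ∧ w j = true).card

/-- Number of `Y`'s (encoded as `false`) among the first `i` letters of the word `w`. -/
def countY {n : ℕ} (w : Fin n → Bool) (i : ℕ) : ℕ :=
  (Finset.univ.filter fun j : Fin n => (j : ℕ) < i ∧ w j = false).card

/-- The weight of a word: the product over positions `i` of `X(aᵢ,bᵢ)` if the letter
at `i` is `X` and `Y(aᵢ,bᵢ)` if it is `Y`, where `(aᵢ,bᵢ)` counts the `X`'s and `Y`'s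
among the first `i` letters. -/
def wt {R : Type*} [CommRing R] (X Y : ℕ × ℕ → R) {n : ℕ} (w : Fin n → Bool) : R :=
  ∏ i : Fin n,
    if w i then X (countX w (i : ℕ), countY w (i : ℕ))
    else Y (countX w (i : ℕ), countY w (i : ℕ))

/-- The number of inversions of the word `w`: pairs `i < j` with `wᵢ = X` and `wⱼ = Y`. -/
def inversions {n : ℕ} (w : Fin n → Bool) : ℕ :=
  (Finset.univ.filter fun p : Fin n × Fin n =>
    p.1 < p.2 ∧ w p.1 = true ∧ w p.2 = false).card

/-! ### Auxiliary list-based machinery -/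

/-- Weight of a list word starting at lattice point `(a, b)`. -/
def wtL {R : Type*} [CommRing R] (X Y : ℕ × ℕ → R) : ℕ → ℕ → List Bool → R
  | _, _, [] => 1
  | a, b, (true :: t) => X (a, b) * wtL X Y (a + 1) b t
  | a, b, (false :: t) => Y (a, b) * wtL X Y a (b + 1) t

/-- Inversions of a list word. -/
def invL : List Bool → ℕ
  | [] => 0
  | (true :: t) => t.count false + invL t
  | (false :: t) => invL t

lemma key_comm {R : Type*} [CommRing R] (q : R) (X Y : ℕ × ℕ → R)
    (hq : ∀ k l, X (k, l) * Y (k + 1, l) = q * (Y (k, l) * X (k, l + 1))) :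
    ∀ (m a b : ℕ), X (a, b) * ∏ j ∈ Finset.range m, Y (a + 1, b + j)
      = q ^ m * (∏ j ∈ Finset.range m, Y (a, b + j)) * X (a, b + m)
  | 0, a, b => by simp
  | (m + 1), a, b => by
    have h1 : ∏ j ∈ Finset.range (m + 1), Y (a + 1, b + j)
        = (∏ j ∈ Finset.range m, Y (a + 1, (b + 1) + j)) * Y (a + 1, b) := by
      rw [Finset.prod_range_succ']
      simp [add_assoc, add_comm 1]
    have h2 : ∏ j ∈ Finset.range (m + 1), Y (a, b + j)
        = (∏ j ∈ Finset.range m, Y (a, (b + 1) + j)) * Y (a, b) := by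
      rw [Finset.prod_range_succ']
      simp [add_assoc, add_comm 1]
    have ih := key_comm q X Y hq m a (b + 1)
    calc X (a, b) * ∏ j ∈ Finset.range (m + 1), Y (a + 1, b + j)
        = (X (a, b) * Y (a + 1, b)) * ∏ j ∈ Finset.range m, Y (a + 1, (b + 1) + j) := by
          rw [h1]; ring
      _ = q * (Y (a, b) * (X (a, b + 1) * ∏ j ∈ Finset.range m, Y (a + 1, (b + 1) + j))) := by
          rw [hq]; ring
      _ = q * (Y (a, b) * (q ^ m * (∏ j ∈ Finset.range m, Y (a, (b + 1) + j)) * X (a, (b + 1) + m))) := by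
          rw [ih]
      _ = q ^ (m + 1) * (∏ j ∈ Finset.range (m + 1), Y (a, b + j)) * X (a, b + (m + 1)) := by
          rw [h2]
          have : (b + 1) + m = b + (m + 1) := by ring
          rw [this]; ring

lemma wtL_eq {R : Type*} [CommRing R] (q : R) (X Y : ℕ × ℕ → R)
    (hq : ∀ k l, X (k, l) * Y (k + 1, l) = q * (Y (k, l) * X (k, l + 1))) :
    ∀ (t : List Bool) (a b : ℕ),
      wtL X Y a b t = q ^ invL t *
        ((∏ j ∈ Finset.range (t.count false), Y (a, b + j)) *
          ∏ i ∈ Finset.range (t.count true), X (a + i, b + t.count false))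
  | [], a, b => by simp [wtL, invL]
  | (true :: t), a, b => by
    have ih := wtL_eq q X Y hq t (a + 1) b
    have hkey := key_comm q X Y hq (t.count false) a b
    have hX : ∏ i ∈ Finset.range (t.count true + 1), X (a + i, b + t.count false)
        = (∏ i ∈ Finset.range (t.count true), X ((a + 1) + i, b + t.count false))
            * X (a, b + t.count false) := by
      rw [Finset.prod_range_succ']
      simp [add_assoc, add_comm 1]
    rw [wtL, ih]
    simp only [List.count_cons, invL]
    norm_num
    rw [pow_add, hX]
    calc X (a, b) * (q ^ invL t *
          ((∏ j ∈ Finset.range (t.count false), Y (a + 1, b + j)) *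
            ∏ i ∈ Finset.range (t.count true), X ((a + 1) + i, b + t.count false)))
        = q ^ invL t * ((X (a, b) * ∏ j ∈ Finset.range (t.count false), Y (a + 1, b + j)) *
            ∏ i ∈ Finset.range (t.count true), X ((a + 1) + i, b + t.count false)) := by ring
      _ = q ^ invL t * ((q ^ t.count false * (∏ j ∈ Finset.range (t.count false), Y (a, b + j))
            * X (a, b + t.count false)) *
            ∏ i ∈ Finset.range (t.count true), X ((a + 1) + i, b + t.count false)) := by
          rw [hkey]
      _ = q ^ t.count false * q ^ invL t *
          ((∏ j ∈ Finset.range (t.count false), Y (a, b + j)) *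
            ((∏ i ∈ Finset.range (t.count true), X ((a + 1) + i, b + t.count false))
              * X (a, b + t.count false))) := by ring
  | (false :: t), a, b => by
    have ih := wtL_eq q X Y hq t a (b + 1)
    have hY : ∏ j ∈ Finset.range (t.count false + 1), Y (a, b + j)
        = (∏ j ∈ Finset.range (t.count false), Y (a, (b + 1) + j)) * Y (a, b) := by
      rw [Finset.prod_range_succ']
      simp [add_assoc, add_comm 1]
    rw [wtL, ih]
    simp only [List.count_cons, invL]
    norm_num
    rw [hY]
    have : (b + 1) + t.count false = b + (t.count false + 1) := by ring
    rw [← this]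
    ring

/-! ### Bridges between the `Fin` world and the list world -/

lemma countX_succ {n : ℕ} (w : Fin (n + 1) → Bool) (i : ℕ) :
    countX w (i + 1) = (if w 0 = true then 1 else 0) + countX (fun j : Fin n => w j.succ) i := by
  simp only [countX, Finset.card_filter, Fin.sum_univ_succ,
    Fin.val_zero, Fin.val_succ, Nat.zero_lt_succ, true_and, Nat.succ_lt_succ_iff]

lemma countY_succ {n : ℕ} (w : Fin (n + 1) → Bool) (i : ℕ) :
    countY w (i + 1) = (if w 0 = false then 1 else 0) + countY (fun j : Fin n => w j.succ) i := by
  simp only [countY, Finset.card_filter, Fin.sum_univ_succ,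
    Fin.val_zero, Fin.val_succ, Nat.zero_lt_succ, true_and, Nat.succ_lt_succ_iff]

lemma countX_zero {n : ℕ} (w : Fin n → Bool) : countX w 0 = 0 := by
  simp [countX]

lemma countY_zero {n : ℕ} (w : Fin n → Bool) : countY w 0 = 0 := by
  simp [countY]

lemma genwt_eq_wtL {R : Type*} [CommRing R] (X Y : ℕ × ℕ → R) :
    ∀ {n : ℕ} (w : Fin n → Bool) (a b : ℕ),
      (∏ i : Fin n, if w i then X (a + countX w (i : ℕ), b + countY w (i : ℕ))
        else Y (a + countX w (i : ℕ), b + countY w (i : ℕ)))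
      = wtL X Y a b (List.ofFn w) := by
  intro n
  induction n with
  | zero => intro w a b; simp [wtL]
  | succ n ih =>
    intro w a b
    rw [Fin.prod_univ_succ, List.ofFn_succ]
    cases h0 : w 0 with
    | true =>
      simp only [h0, if_true, Fin.val_zero, countX_zero, countY_zero, add_zero, wtL]
      congr 1
      rw [← ih (fun j => w j.succ) (a + 1) b]
      refine Finset.prod_congr rfl ?_
      intro i _
      rw [show ((i.succ : Fin (n+1)) : ℕ) = (i : ℕ) + 1 from rfl]
      have h1 : a + countX w ((i : ℕ) + 1) = (a + 1) + countX (fun j : Fin n => w j.succ) (i : ℕ) := by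
        rw [countX_succ, h0]; simp; ring
      have h2 : b + countY w ((i : ℕ) + 1) = b + countY (fun j : Fin n => w j.succ) (i : ℕ) := by
        rw [countY_succ, h0]; simp
      rw [h1, h2]
    | false =>
      simp only [h0, Bool.false_eq_true, if_false, Fin.val_zero, countX_zero, countY_zero,
        add_zero, wtL]
      congr 1
      rw [← ih (fun j => w j.succ) a (b + 1)]
      refine Finset.prod_congr rfl ?_
      intro i _
      rw [show ((i.succ : Fin (n+1)) : ℕ) = (i : ℕ) + 1 from rfl]
      have h1 : a + countX w ((i : ℕ) + 1) = a + countX (fun j : Fin n => w j.succ) (i : ℕ) := by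
        rw [countX_succ, h0]; simp
      have h2 : b + countY w ((i : ℕ) + 1) = (b + 1) + countY (fun j : Fin n => w j.succ) (i : ℕ) := by
        rw [countY_succ, h0]; simp; ring
      rw [h1, h2]

lemma wt_eq_wtL {R : Type*} [CommRing R] (X Y : ℕ × ℕ → R) {n : ℕ} (w : Fin n → Bool) :
    wt X Y w = wtL X Y 0 0 (List.ofFn w) := by
  rw [← genwt_eq_wtL X Y w 0 0]
  unfold wt
  simp

lemma count_false_ofFn : ∀ {n : ℕ} (w : Fin n → Bool),
    (List.ofFn w).count false = ∑ j : Fin n, if w j = false then 1 else 0 := by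
  intro n
  induction n with
  | zero => intro w; simp
  | succ n ih =>
    intro w
    rw [List.ofFn_succ, Fin.sum_univ_succ, List.count_cons, ih (fun j => w j.succ)]
    cases h0 : w 0 <;> simp [h0, add_comm]

lemma inversions_as_sum {n : ℕ} (w : Fin n → Bool) :
    inversions w = ∑ j : Fin n, if w j = false then countX w (j : ℕ) else 0 := by
  unfold inversions
  rw [Finset.card_filter, Fintype.sum_prod_type, Finset.sum_comm]
  refine Finset.sum_congr rfl ?_
  intro j _
  by_cases hj : w j = false
  · simp only [hj, if_true, and_true]
    rw [countX, Finset.card_filter]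
    refine Finset.sum_congr rfl ?_
    intro i _
    exact if_congr (by rw [Fin.lt_def]) rfl rfl
  · simp [hj]

lemma inversions_eq_invL : ∀ {n : ℕ} (w : Fin n → Bool),
    inversions w = invL (List.ofFn w) := by
  intro n
  induction n with
  | zero => intro w; simp [inversions, invL]
  | succ n ih =>
    intro w
    rw [inversions_as_sum, Fin.sum_univ_succ, List.ofFn_succ]
    cases h0 : w 0 with
    | true =>
      simp only [invL]
      rw [if_neg (by simp : ¬(true = false)), zero_add]
      rw [← ih (fun j => w j.succ), inversions_as_sum (fun j => w j.succ),
        count_false_ofFn (fun j => w j.succ)]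
      rw [← Finset.sum_add_distrib]
      refine Finset.sum_congr rfl ?_
      intro i _
      rw [show ((i.succ : Fin (n+1)) : ℕ) = (i : ℕ) + 1 from rfl, countX_succ, h0]
      cases h : w i.succ <;> simp [h, add_comm]
    | false =>
      simp only [invL]
      rw [if_pos trivial, show ((0 : Fin (n+1)) : ℕ) = 0 from rfl, countX_zero, zero_add]
      rw [← ih (fun j => w j.succ), inversions_as_sum (fun j => w j.succ)]
      refine Finset.sum_congr rfl ?_
      intro i _
      rw [show ((i.succ : Fin (n+1)) : ℕ) = (i : ℕ) + 1 from rfl, countX_succ, h0]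
      cases h : w i.succ <;> simp [h]

lemma count_true_ofFn : ∀ {n : ℕ} (w : Fin n → Bool),
    (List.ofFn w).count true = (Finset.univ.filter fun i => w i = true).card := by
  intro n
  induction n with
  | zero => intro w; simp
  | succ n ih =>
    intro w
    rw [List.ofFn_succ, List.count_cons, ih (fun j => w j.succ),
      Finset.card_filter, Finset.card_filter, Fin.sum_univ_succ]
    cases h0 : w 0 <;> simp [h0, add_comm]

/-- If `X(k,l) Y(k+1,l) = q Y(k,l) X(k,l+1)`, then the weight of any word with exactly
`k` letters `X` (and `l` letters `Y`) equals
`q^(inv w) * (∏_{j<l} Y(0,j)) * (∏_{i<k} X(i,l))`. -/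
theorem wt_eq_q_pow_inversions {R : Type*} [CommRing R] (q : R) (X Y : ℕ × ℕ → R)
    (hq : ∀ k l, X (k, l) * Y (k + 1, l) = q * (Y (k, l) * X (k, l + 1)))
    (k l : ℕ) (w : Fin (k + l) → Bool)
    (hw : (Finset.univ.filter fun i => w i = true).card = k) :
    wt X Y w = q ^ inversions w *
      ((∏ j ∈ Finset.range l, Y (0, j)) * ∏ i ∈ Finset.range k, X (i, l)) := by
  have hct : (List.ofFn w).count true = k := by rw [count_true_ofFn]; exact hw
  have hlen : (List.ofFn w).length = k + l := by simp
  have hcf : (List.ofFn w).count false = l := by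
    have h := List.count_true_add_count_false (List.ofFn w)
    omega
  rw [wt_eq_wtL, wtL_eq q X Y hq, inversions_eq_invL w, hct, hcf]
  simp
end
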